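/- Let p ≥ 1 be a natural number and let F : ℝ → ℝ be (p+1) times continuously differentiable with F, F', …, F^{(p+1)} all bounded on ℝ. Then there exists a constant C, depending only on p and on these bounds, such that for every Schwartz function φ : ℝ → ℝ one has (φ, F·φ'')_p ≤ C ‖φ‖_p² − ∫_ℝ (1+x²)^{2p} (φ^{(p+1)}(x))² F(x) dx, where the subtracted term carries the same weight (1+x²)^{2p} as the inner product (·,·)_p. (Part (2) of the paper's Lemma on weighted integration-by-parts estimates.) -/

import Mathlib

open MeasureTheory

open Finset

private lemma hasDerivAt_iteratedDeriv' {f : ℝ → ℝ} {j n : ℕ} (hf : ContDiff ℝ (n : ℕ∞) f)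
    (hj : j < n) (x : ℝ) :
    HasDerivAt (iteratedDeriv j f) (iteratedDeriv (j + 1) f x) x := by
  rw [iteratedDeriv_succ]
  exact ((hf.differentiable_iteratedDeriv j (by exact_mod_cast hj)) x).hasDerivAt

private lemma pascal_sum (n : ℕ) (a b : ℕ → ℝ) :
    ∑ j ∈ range (n+1), ((n.choose j : ℝ) * a (j+1) * b (n-j)
        + (n.choose j : ℝ) * a j * b (n-j+1))
      = ∑ j ∈ range (n+2), (((n+1).choose j : ℝ) * a j * b (n+1-j)) := by
  rw [Finset.sum_add_distrib]
  rw [Finset.sum_range_succ' (fun j => ((n+1).choose j : ℝ) * a j * b (n+1-j)) (n+1)]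
  have h1 : ∀ j ∈ range (n+1), (((n+1).choose (j+1) : ℝ) * a (j+1) * b (n+1-(j+1)))
      = ((n.choose j : ℝ) * a (j+1) * b (n-j)) + ((n.choose (j+1) : ℝ) * a (j+1) * b (n-j)) := by
    intro j hj
    have : n + 1 - (j+1) = n - j := by omega
    rw [this, Nat.choose_succ_succ]
    push_cast
    ring
  rw [Finset.sum_congr rfl h1, Finset.sum_add_distrib]
  have h2 : ∑ j ∈ range (n+1), ((n.choose j : ℝ) * a j * b (n-j+1))
      = (∑ j ∈ range n, ((n.choose (j+1) : ℝ) * a (j+1) * b (n-(j+1)+1)))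
        + ((n.choose 0 : ℝ) * a 0 * b (n-0+1)) :=
    Finset.sum_range_succ' (fun j => ((n.choose j : ℝ) * a j * b (n-j+1))) n
  have h3 : ∑ j ∈ range (n+1), ((n.choose (j+1) : ℝ) * a (j+1) * b (n-j))
      = ∑ j ∈ range n, ((n.choose (j+1) : ℝ) * a (j+1) * b (n-j)) := by
    rw [Finset.sum_range_succ]
    simp
  have h4 : ∀ j ∈ range n, ((n.choose (j+1) : ℝ) * a (j+1) * b (n-(j+1)+1))
      = ((n.choose (j+1) : ℝ) * a (j+1) * b (n-j)) := by
    intro j hj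
    simp only [mem_range] at hj
    have : n - (j+1) + 1 = n - j := by omega
    rw [this]
  rw [h2, Finset.sum_congr rfl h4, h3]
  simp
  ring

private lemma leibniz_iteratedDeriv : ∀ (n : ℕ) (f g : ℝ → ℝ), ContDiff ℝ (n : ℕ∞) f →
    ContDiff ℝ (n : ℕ∞) g →
    iteratedDeriv n (fun x => f x * g x) =
      fun x => ∑ j ∈ Finset.range (n + 1),
        (n.choose j : ℝ) * iteratedDeriv j f x * iteratedDeriv (n - j) g x := by
  intro n
  induction n with
  | zero => intro f g _ _; funext x; simp
  | succ n ih =>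
    intro f g hf hg
    have hf' : ContDiff ℝ (n : ℕ∞) f := hf.of_le (by exact_mod_cast Nat.le_succ n)
    have hg' : ContDiff ℝ (n : ℕ∞) g := hg.of_le (by exact_mod_cast Nat.le_succ n)
    rw [iteratedDeriv_succ, ih f g hf' hg']
    funext x
    have hD : HasDerivAt (fun y => ∑ j ∈ Finset.range (n + 1),
        (n.choose j : ℝ) * iteratedDeriv j f y * iteratedDeriv (n - j) g y)
        (∑ j ∈ Finset.range (n + 1),
          ((n.choose j : ℝ) * iteratedDeriv (j+1) f x * iteratedDeriv (n - j) g x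
            + (n.choose j : ℝ) * iteratedDeriv j f x * iteratedDeriv (n - j + 1) g x)) x := by
      apply HasDerivAt.fun_sum
      intro j hj
      simp only [mem_range] at hj
      have h1 : HasDerivAt (iteratedDeriv j f) (iteratedDeriv (j+1) f x) x :=
        hasDerivAt_iteratedDeriv' hf (by omega) x
      have h2 : HasDerivAt (iteratedDeriv (n-j) g) (iteratedDeriv (n-j+1) g x) x :=
        hasDerivAt_iteratedDeriv' hg (by omega) x
      have := (h1.const_mul ((n.choose j : ℝ))).fun_mul h2
      exact this
    rw [hD.deriv]
    have := pascal_sum n (fun j => iteratedDeriv j f x) (fun j => iteratedDeriv j g x)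
    rw [this]
open MeasureTheory Finset

private lemma weight_le (m : ℕ) (x : ℝ) : (1+x^2)^m ≤ 2^m + 2^m * ‖x‖^(2*m) := by
  have hx : x^(2*m) = ‖x‖^(2*m) := by
    rw [Real.norm_eq_abs, ← abs_pow]
    exact (abs_of_nonneg (by rw [pow_mul]; positivity)).symm
  rcases le_total (x^2) 1 with h|h
  · have : (1+x^2)^m ≤ 2^m := by
      apply pow_le_pow_left₀ (by positivity) (by linarith)
    have h2 : (0:ℝ) ≤ 2^m * ‖x‖^(2*m) := by positivity
    linarith
  · have : (1+x^2)^m ≤ (2*x^2)^m := by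
      apply pow_le_pow_left₀ (by positivity) (by linarith)
    have h2 : (2*x^2)^m = 2^m * x^(2*m) := by
      rw [mul_pow, pow_mul]
    have h3 : (0:ℝ) ≤ 2^m := by positivity
    rw [h2, hx] at this
    linarith

private lemma integrable_weight_mul (m : ℕ) (ψ : SchwartzMap ℝ ℝ) :
    Integrable (fun x : ℝ => (1+x^2)^m * ‖ψ x‖) := by
  have h1 : Integrable (fun x : ℝ => 2^m * ‖ψ x‖ + 2^m * (‖x‖^(2*m) * ‖ψ x‖)) :=
    ((ψ.integrable (μ := volume)).norm.const_mul _).add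
      ((ψ.integrable_pow_mul volume (2*m)).const_mul _)
  apply h1.mono' ((Continuous.mul (by continuity) ψ.continuous.norm).aestronglyMeasurable)
  filter_upwards with x
  have hb := weight_le m x
  have h0 : (0:ℝ) ≤ ‖ψ x‖ := norm_nonneg _
  have h2 : ‖(1+x^2)^m * ‖ψ x‖‖ = (1+x^2)^m * ‖ψ x‖ := by
    rw [Real.norm_of_nonneg (by positivity)]
  simp only [Pi.mul_apply]
  rw [h2]
  nlinarith [norm_nonneg x, pow_nonneg (norm_nonneg x) (2*m)]

private lemma schwartz_bound (χ : SchwartzMap ℝ ℝ) : ∃ C : ℝ, 0 ≤ C ∧ ∀ x, ‖χ x‖ ≤ C := by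
  obtain ⟨C, hC, h⟩ := χ.decay 0 0
  exact ⟨C, hC.le, fun x => by simpa using h x⟩

private lemma integrable_G_mul (m : ℕ) (K : ℝ) (G : ℝ → ℝ) (hGc : Continuous G)
    (hGb : ∀ x, |G x| ≤ K * (1+x^2)^m) (ψ χ : SchwartzMap ℝ ℝ) :
    Integrable (fun x : ℝ => G x * (ψ x * χ x)) := by
  obtain ⟨Cχ, hCχ0, hCχ⟩ := schwartz_bound χ
  have hK : 0 ≤ K := by
    have := (abs_nonneg (G 0)).trans (hGb 0)
    simpa using this
  apply ((integrable_weight_mul m ψ).const_mul (K * Cχ)).mono'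
    (hGc.mul (ψ.continuous.mul χ.continuous)).aestronglyMeasurable
  filter_upwards with x
  have h1 : ‖G x * (ψ x * χ x)‖ = |G x| * (‖ψ x‖ * ‖χ x‖) := by
    simp [abs_mul, Real.norm_eq_abs, mul_assoc]
  simp only [Pi.mul_apply]
  rw [h1]
  have h2 : |G x| * (‖ψ x‖ * ‖χ x‖) ≤ (K * (1+x^2)^m) * (‖ψ x‖ * Cχ) := by
    apply mul_le_mul (hGb x) ?_ (by positivity) (by positivity)
    exact mul_le_mul_of_nonneg_left (hCχ x) (norm_nonneg _)
  calc |G x| * (‖ψ x‖ * ‖χ x‖) ≤ (K * (1+x^2)^m) * (‖ψ x‖ * Cχ) := h2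
    _ = K * Cχ * ((1+x^2)^m * ‖ψ x‖) := by ring

private lemma key_est (m : ℕ) (K : ℝ) (G : ℝ → ℝ) (hGc : Continuous G)
    (hGb : ∀ x, |G x| ≤ K * (1+x^2)^m) (ψ χ : SchwartzMap ℝ ℝ) :
    ∫ x : ℝ, G x * (ψ x * χ x)
      ≤ K/2 * ((∫ x : ℝ, (1+x^2)^m * (ψ x)^2) + ∫ x : ℝ, (1+x^2)^m * (χ x)^2) := by
  have hK : 0 ≤ K := by
    have := (abs_nonneg (G 0)).trans (hGb 0)
    simpa using this
  have hwb : ∀ x : ℝ, |(1+x^2)^m| ≤ (1:ℝ) * (1+x^2)^m := fun x => by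
    rw [one_mul, abs_of_nonneg (by positivity)]
  have hIψ : Integrable (fun x : ℝ => (1+x^2)^m * (ψ x * ψ x)) :=
    integrable_G_mul m 1 _ (by continuity) hwb ψ ψ
  have hIχ : Integrable (fun x : ℝ => (1+x^2)^m * (χ x * χ x)) :=
    integrable_G_mul m 1 _ (by continuity) hwb χ χ
  have hI1 : Integrable (fun x : ℝ => G x * (ψ x * χ x)) :=
    integrable_G_mul m K G hGc hGb ψ χ
  have hmono : ∫ x : ℝ, G x * (ψ x * χ x)
      ≤ ∫ x : ℝ, K/2 * ((1+x^2)^m * (ψ x * ψ x)) + K/2 * ((1+x^2)^m * (χ x * χ x)) := by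
    apply integral_mono hI1 ((hIψ.const_mul _).add (hIχ.const_mul _))
    intro x
    simp only [Pi.add_apply]
    have e1 : G x * (ψ x * χ x) ≤ |G x| * (|ψ x| * |χ x|) := by
      calc G x * (ψ x * χ x) ≤ |G x * (ψ x * χ x)| := le_abs_self _
        _ = |G x| * (|ψ x| * |χ x|) := by rw [abs_mul, abs_mul]
    have e2 : |G x| * (|ψ x| * |χ x|) ≤ (K * (1+x^2)^m) * (|ψ x| * |χ x|) :=
      mul_le_mul_of_nonneg_right (hGb x) (by positivity)
    have e3 : 2 * (|ψ x| * |χ x|) ≤ ψ x * ψ x + χ x * χ x := by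
      nlinarith [sq_nonneg (|ψ x| - |χ x|), sq_abs (ψ x), sq_abs (χ x)]
    have e4 : (0:ℝ) ≤ K * (1+x^2)^m / 2 := by positivity
    nlinarith [mul_le_mul_of_nonneg_left e3 e4]
  calc ∫ x : ℝ, G x * (ψ x * χ x)
      ≤ ∫ x : ℝ, K/2 * ((1+x^2)^m * (ψ x * ψ x)) + K/2 * ((1+x^2)^m * (χ x * χ x)) := hmono
    _ = K/2 * ((∫ x : ℝ, (1+x^2)^m * (ψ x * ψ x)) + ∫ x : ℝ, (1+x^2)^m * (χ x * χ x)) := by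
        rw [integral_add (hIψ.const_mul _) (hIχ.const_mul _), integral_const_mul,
          integral_const_mul]
        ring
    _ = K/2 * ((∫ x : ℝ, (1+x^2)^m * (ψ x)^2) + ∫ x : ℝ, (1+x^2)^m * (χ x)^2) := by
        congr 1
        congr 1 <;> { apply integral_congr_ae; filter_upwards with x; ring }

private noncomputable def SDer (φ : SchwartzMap ℝ ℝ) : ℕ → SchwartzMap ℝ ℝ
  | 0 => φ
  | (k+1) => SchwartzMap.derivCLM ℝ ℝ (SDer φ k)

private lemma SDer_coe (φ : SchwartzMap ℝ ℝ) : ∀ k, ⇑(SDer φ k) = iteratedDeriv k ⇑φ := by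
  intro k
  induction k with
  | zero => rfl
  | succ k ih =>
    funext x
    rw [iteratedDeriv_succ, ← ih]
    exact SchwartzMap.derivCLM_apply ℝ (SDer φ k) x

private lemma ibp (G G' : ℝ → ℝ) (hG : ∀ x, HasDerivAt G (G' x) x) (hG'c : Continuous G')
    (m : ℕ) (K K' : ℝ) (hGb : ∀ x, |G x| ≤ K * (1+x^2)^m) (hG'b : ∀ x, |G' x| ≤ K' * (1+x^2)^m)
    (ψ χ : SchwartzMap ℝ ℝ) :
    ∫ x : ℝ, G x * (ψ x * deriv χ x)
      = -∫ x : ℝ, (G' x * (ψ x * χ x) + G x * (deriv ψ x * χ x)) := by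
  have hGc : Continuous G := by
    rw [continuous_iff_continuousAt]; exact fun x => (hG x).continuousAt
  have hdψ : ⇑(SchwartzMap.derivCLM ℝ ℝ ψ) = deriv ⇑ψ := funext fun x =>
    SchwartzMap.derivCLM_apply ℝ ψ x
  have hdχ : ⇑(SchwartzMap.derivCLM ℝ ℝ χ) = deriv ⇑χ := funext fun x =>
    SchwartzMap.derivCLM_apply ℝ χ x
  set u : ℝ → ℝ := fun x => G x * ψ x with hu_def
  set u' : ℝ → ℝ := fun x => G' x * ψ x + G x * deriv ψ x with hu'_def
  have hu : ∀ x, HasDerivAt u (u' x) x := fun x =>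
    (hG x).mul (ψ.differentiable.differentiableAt.hasDerivAt)
  have hv : ∀ x, HasDerivAt (⇑χ) (deriv (⇑χ) x) x := fun x =>
    χ.differentiable.differentiableAt.hasDerivAt
  have hK : 0 ≤ K := by
    have := (abs_nonneg (G 0)).trans (hGb 0); simpa using this
  have hK' : 0 ≤ K' := by
    have := (abs_nonneg (G' 0)).trans (hG'b 0); simpa using this
  have hI1 : Integrable (u * deriv ⇑χ) := by
    have := integrable_G_mul m K G hGc hGb ψ (SchwartzMap.derivCLM ℝ ℝ χ)
    rw [hdχ] at this
    apply this.congr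
    filter_upwards with x
    simp only [Pi.mul_apply, hu_def]
    ring
  have hI2a : Integrable (fun x => G' x * (ψ x * χ x)) :=
    integrable_G_mul m K' G' hG'c hG'b ψ χ
  have hI2b : Integrable (fun x => G x * (deriv ⇑ψ x * χ x)) := by
    have := integrable_G_mul m K G hGc hGb (SchwartzMap.derivCLM ℝ ℝ ψ) χ
    rwa [hdψ] at this
  have hI2 : Integrable (u' * ⇑χ) := by
    apply (hI2a.add hI2b).congr
    filter_upwards with x
    simp only [Pi.mul_apply, Pi.add_apply, hu'_def]
    ring
  have hI3 : Integrable (u * ⇑χ) := by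
    have := integrable_G_mul m K G hGc hGb ψ χ
    apply this.congr
    filter_upwards with x
    simp only [Pi.mul_apply, hu_def]
    ring
  have h := integral_mul_deriv_eq_deriv_mul_of_integrable (fun x _ => hu x) (fun x _ => hv x) hI1 hI2 hI3
  have e1 : ∫ x : ℝ, G x * (ψ x * deriv (⇑χ) x) = ∫ x : ℝ, u x * deriv (⇑χ) x := by
    apply integral_congr_ae; filter_upwards with x; simp only [hu_def]; ring
  have e2 : ∫ x : ℝ, u' x * χ x
      = ∫ x : ℝ, (G' x * (ψ x * χ x) + G x * (deriv (⇑ψ) x * χ x)) := by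
    apply integral_congr_ae; filter_upwards with x; simp only [hu'_def]; ring
  rw [e1, h, e2]

private lemma ibp_self (G G' : ℝ → ℝ) (hG : ∀ x, HasDerivAt G (G' x) x) (hG'c : Continuous G')
    (m : ℕ) (K K' : ℝ) (hGb : ∀ x, |G x| ≤ K * (1+x^2)^m) (hG'b : ∀ x, |G' x| ≤ K' * (1+x^2)^m)
    (ψ : SchwartzMap ℝ ℝ) :
    ∫ x : ℝ, G x * (ψ x * deriv (⇑ψ) x) = -(1/2) * ∫ x : ℝ, G' x * (ψ x * ψ x) := by
  have hGc : Continuous G := by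
    rw [continuous_iff_continuousAt]; exact fun x => (hG x).continuousAt
  have hdψ : ⇑(SchwartzMap.derivCLM ℝ ℝ ψ) = deriv ⇑ψ := funext fun x =>
    SchwartzMap.derivCLM_apply ℝ ψ x
  have h := ibp G G' hG hG'c m K K' hGb hG'b ψ ψ
  have hI2a : Integrable (fun x => G' x * (ψ x * ψ x)) :=
    integrable_G_mul m K' G' hG'c hG'b ψ ψ
  have hI2b : Integrable (fun x => G x * (deriv ⇑ψ x * ψ x)) := by
    have := integrable_G_mul m K G hGc hGb (SchwartzMap.derivCLM ℝ ℝ ψ) ψ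
    rwa [hdψ] at this
  rw [integral_add hI2a hI2b] at h
  have e3 : ∫ x : ℝ, G x * (deriv (⇑ψ) x * ψ x) = ∫ x : ℝ, G x * (ψ x * deriv (⇑ψ) x) := by
    apply integral_congr_ae; filter_upwards with x; ring
  rw [e3] at h
  linarith


private lemma iteratedDeriv_comp_iteratedDeriv (m n : ℕ) (f : ℝ → ℝ) :
    iteratedDeriv m (iteratedDeriv n f) = iteratedDeriv (m + n) f := by
  induction m with
  | zero => simp
  | succ m ih =>
    rw [iteratedDeriv_succ, ih, show m + 1 + n = (m + n) + 1 by omega, iteratedDeriv_succ]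


/-- The weighted Hilbert norm
`‖φ‖_n := (Σ_{k=0}^{n} ∫_ℝ (1+x²)^{2n} (φ^{(k)}(x))² dx)^{1/2}`. -/
noncomputable def wNorm (n : ℕ) (φ : ℝ → ℝ) : ℝ :=
  Real.sqrt (∑ k ∈ Finset.range (n + 1),
    ∫ x : ℝ, (1 + x ^ 2) ^ (2 * n) * (iteratedDeriv k φ x) ^ 2)

/-- The weighted inner product
`(φ, ψ)_n := Σ_{k=0}^{n} ∫_ℝ (1+x²)^{2n} φ^{(k)}(x) ψ^{(k)}(x) dx`. -/
noncomputable def wInner (n : ℕ) (φ ψ : ℝ → ℝ) : ℝ :=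
  ∑ k ∈ Finset.range (n + 1),
    ∫ x : ℝ, (1 + x ^ 2) ^ (2 * n) * (iteratedDeriv k φ x * iteratedDeriv k ψ x)

set_option maxHeartbeats 2000000 in
/-- Part (2) of the paper's weighted integration-by-parts Lemma: if `F` is `p+1` times
continuously differentiable with `F, F', …, F^{(p+1)}` bounded, then there is a constant
`C` such that for all Schwartz `φ`,
`(φ, F·φ'')_p ≤ C ‖φ‖_p² − ∫_ℝ (1+x²)^{2p} (φ^{(p+1)}(x))² F(x) dx`. -/
theorem wInner_second_order_bound (p : ℕ) (hp : 1 ≤ p) (F : ℝ → ℝ)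
    (hF : ContDiff ℝ ((p + 1 : ℕ) : ℕ∞) F)
    (hFb : ∀ k ≤ p + 1, ∃ M : ℝ, ∀ x : ℝ, |iteratedDeriv k F x| ≤ M) :
    ∃ C : ℝ, ∀ φ : SchwartzMap ℝ ℝ,
      wInner p ⇑φ (fun x => F x * iteratedDeriv 2 (⇑φ) x)
        ≤ C * (wNorm p ⇑φ) ^ 2
          - ∫ x : ℝ, (1 + x ^ 2) ^ (2 * p) * (iteratedDeriv (p + 1) (⇑φ) x) ^ 2 * F x := by
  classical
  obtain ⟨q, hq⟩ : ∃ q, 2 * p = q + 1 := ⟨2 * p - 1, by omega⟩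
  have hq1 : 1 ≤ q := by omega
  -- uniform bound M on the derivatives of F
  have hkey : ∀ j : ℕ, ∃ Mj : ℝ, j ≤ p + 1 → ∀ x, |iteratedDeriv j F x| ≤ Mj := by
    intro j
    by_cases h : j ≤ p + 1
    · obtain ⟨Mj, hMj⟩ := hFb j h
      exact ⟨Mj, fun _ => hMj⟩
    · exact ⟨0, fun h' => absurd h' h⟩
  choose Mf hMf using hkey
  set M : ℝ := ∑ j ∈ Finset.range (p + 2), |Mf j| with hM_def
  have hM0 : 0 ≤ M := Finset.sum_nonneg fun _ _ => abs_nonneg _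
  have hMb : ∀ j, j ≤ p + 1 → ∀ x : ℝ, |iteratedDeriv j F x| ≤ M := by
    intro j hj x
    refine (hMf j hj x).trans ((le_abs_self _).trans ?_)
    exact Finset.single_le_sum (f := fun i => |Mf i|) (fun _ _ => abs_nonneg _)
      (Finset.mem_range.mpr (by omega))
  set cBig : ℝ := 2 ^ p * (M + 1) * (((q : ℝ) + 3) ^ 2) * ((p : ℝ) + 2) with hcBig_def
  -- basic positivity facts
  have hqc : (0:ℝ) ≤ (q:ℝ) := Nat.cast_nonneg q
  have hpc : (0:ℝ) ≤ (p:ℝ) := Nat.cast_nonneg p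
  have hone_le : (1:ℝ) ≤ 2 ^ p := one_le_pow₀ (by norm_num)
  have hcBig0 : 0 ≤ cBig := by
    rw [hcBig_def]
    have h1 : (0:ℝ) ≤ M + 1 := by linarith
    positivity
  have hprod : ∀ a b c a' b' c' : ℝ, 0 ≤ a → 0 ≤ b → 0 ≤ c → a ≤ a' → b ≤ b' → c ≤ c' →
      a * b * c ≤ a' * b' * c' := by
    intro a b c a' b' c' ha hb hc h1 h2 h3
    exact mul_le_mul (mul_le_mul h1 h2 hb (by linarith)) h3 hc
      (mul_nonneg (by linarith) (by linarith))
  have hq3sq : (1:ℝ) ≤ ((q:ℝ) + 3) ^ 2 := by nlinarith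
  have haM : M ≤ 2 ^ p * (M + 1) := by nlinarith [pow_pos (by norm_num : (0:ℝ) < 2) p]
  have hc1 : 2 ^ p * M ≤ cBig := by
    calc 2 ^ p * M = (2 ^ p * M) * 1 * 1 := by ring
      _ ≤ (2 ^ p * (M + 1)) * (((q:ℝ) + 3) ^ 2) * ((p:ℝ) + 2) :=
          hprod _ _ _ _ _ _ (by positivity) (by norm_num) (by norm_num)
            (by nlinarith [pow_pos (by norm_num : (0:ℝ) < 2) p]) hq3sq (by linarith)
      _ = cBig := by rw [hcBig_def]
  have hc2 : M ≤ cBig := by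
    calc M = M * 1 * 1 := by ring
      _ ≤ (2 ^ p * (M + 1)) * (((q:ℝ) + 3) ^ 2) * ((p:ℝ) + 2) :=
          hprod _ _ _ _ _ _ hM0 (by norm_num) (by norm_num) haM hq3sq (by linarith)
      _ = cBig := by rw [hcBig_def]
  have hc3 : M * ((q:ℝ) + 2) ≤ cBig := by
    calc M * ((q:ℝ) + 2) = M * ((q:ℝ) + 2) * 1 := by ring
      _ ≤ (2 ^ p * (M + 1)) * (((q:ℝ) + 3) ^ 2) * ((p:ℝ) + 2) :=
          hprod _ _ _ _ _ _ hM0 (by linarith) (by norm_num) haM (by nlinarith) (by linarith)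
      _ = cBig := by rw [hcBig_def]
  have hc4 : M * (((q:ℝ) + 3) ^ 2) / 2 ≤ cBig := by
    have h1 : M * (((q:ℝ) + 3) ^ 2) ≤ cBig := by
      calc M * (((q:ℝ) + 3) ^ 2) = M * (((q:ℝ) + 3) ^ 2) * 1 := by ring
        _ ≤ (2 ^ p * (M + 1)) * (((q:ℝ) + 3) ^ 2) * ((p:ℝ) + 2) :=
            hprod _ _ _ _ _ _ hM0 (by positivity) (by norm_num) haM le_rfl (by linarith)
        _ = cBig := by rw [hcBig_def]
    have h2 : 0 ≤ M * (((q:ℝ) + 3) ^ 2) := by positivity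
    linarith
  have hc5 : (p:ℝ) * M * ((q:ℝ) + 2) / 2 ≤ cBig := by
    have h1 : M * ((q:ℝ) + 2) * (p:ℝ) ≤ cBig := by
      calc M * ((q:ℝ) + 2) * (p:ℝ)
          ≤ (2 ^ p * (M + 1)) * (((q:ℝ) + 3) ^ 2) * ((p:ℝ) + 2) :=
            hprod _ _ _ _ _ _ hM0 (by linarith) hpc haM (by nlinarith) (by linarith)
        _ = cBig := by rw [hcBig_def]
    have h2 : 0 ≤ M * ((q:ℝ) + 2) * (p:ℝ) := by positivity
    nlinarith
  -- the weight and its derivatives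
  set w1 : ℝ → ℝ := fun x => ((q:ℝ) + 1) * ((1 + x ^ 2) ^ q * (2 * x)) with hw1_def
  set w2 : ℝ → ℝ := fun x =>
    ((q:ℝ) + 1) * (((q:ℝ) * (1 + x ^ 2) ^ (q - 1) * (2 * x)) * (2 * x) + (1 + x ^ 2) ^ q * 2)
    with hw2_def
  have hbase : ∀ x : ℝ, HasDerivAt (fun y : ℝ => 1 + y ^ 2) (2 * x) x := by
    intro x
    simpa using (hasDerivAt_pow 2 x).const_add (1:ℝ)
  have hw_deriv : ∀ x : ℝ, HasDerivAt (fun y : ℝ => (1 + y ^ 2) ^ (q + 1)) (w1 x) x := by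
    intro x
    have h := (hbase x).fun_pow (q + 1)
    refine h.congr_deriv ?_
    rw [hw1_def]
    push_cast [Nat.add_sub_cancel]
    ring
  have hw1_deriv : ∀ x : ℝ, HasDerivAt w1 (w2 x) x := by
    intro x
    have h2 : HasDerivAt (fun y : ℝ => 2 * y) 2 x := by
      simpa using (hasDerivAt_id x).const_mul (2:ℝ)
    have h3 := (((hbase x).pow q).mul h2).const_mul ((q:ℝ) + 1)
    rw [hw1_def, hw2_def]
    exact h3
  have hx2 : ∀ x : ℝ, (0:ℝ) < 1 + x ^ 2 := fun x => by positivity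
  have h2x : ∀ x : ℝ, |2 * x| ≤ 1 + x ^ 2 := fun x =>
    abs_le.mpr ⟨by nlinarith [sq_nonneg (x + 1)], by nlinarith [sq_nonneg (x - 1)]⟩
  have hw1b : ∀ x : ℝ, |w1 x| ≤ ((q:ℝ) + 1) * (1 + x ^ 2) ^ (q + 1) := by
    intro x
    rw [hw1_def]
    simp only []
    rw [abs_mul, abs_mul, abs_of_nonneg (by positivity : (0:ℝ) ≤ (q:ℝ) + 1),
      abs_of_nonneg (by positivity : (0:ℝ) ≤ (1 + x ^ 2) ^ q), pow_succ]
    have h0 : (0:ℝ) ≤ (1 + x ^ 2) ^ q := by positivity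
    exact mul_le_mul_of_nonneg_left (mul_le_mul_of_nonneg_left (h2x x) h0)
      (by positivity)
  have hw2b : ∀ x : ℝ, |w2 x| ≤ (((q:ℝ) + 1) * ((q:ℝ) + 2)) * (1 + x ^ 2) ^ (q + 1) := by
    intro x
    simp only [hw2_def]
    have e1 : |(q:ℝ) * (1 + x ^ 2) ^ (q - 1) * (2 * x) * (2 * x)|
        ≤ (q:ℝ) * (1 + x ^ 2) ^ (q + 1) := by
      calc |(q:ℝ) * (1 + x ^ 2) ^ (q - 1) * (2 * x) * (2 * x)|
          = (q:ℝ) * (1 + x ^ 2) ^ (q - 1) * (|2 * x| * |2 * x|) := by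
            rw [abs_mul, abs_mul, abs_mul,
              abs_of_nonneg (Nat.cast_nonneg q : (0:ℝ) ≤ (q:ℝ)),
              abs_of_nonneg (by positivity : (0:ℝ) ≤ (1 + x ^ 2) ^ (q - 1))]
            ring
        _ ≤ (q:ℝ) * (1 + x ^ 2) ^ (q - 1) * ((1 + x ^ 2) * (1 + x ^ 2)) := by
            refine mul_le_mul_of_nonneg_left ?_ (by positivity)
            exact mul_le_mul (h2x x) (h2x x) (abs_nonneg _) (hx2 x).le
        _ = (q:ℝ) * ((1 + x ^ 2) ^ (q - 1) * (1 + x ^ 2) ^ 2) := by ring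
        _ = (q:ℝ) * (1 + x ^ 2) ^ (q + 1) := by
            rw [← pow_add, show q - 1 + 2 = q + 1 by omega]
    have e2 : |(1 + x ^ 2) ^ q * 2| ≤ 2 * (1 + x ^ 2) ^ (q + 1) := by
      rw [abs_mul, abs_of_nonneg (by positivity : (0:ℝ) ≤ (1 + x ^ 2) ^ q)]
      have h3 : (1 + x ^ 2) ^ q ≤ (1 + x ^ 2) ^ (q + 1) := by
        apply pow_le_pow_right₀ (by nlinarith [sq_nonneg x]) (by omega)
      rw [show |(2:ℝ)| = 2 by norm_num]
      linarith
    calc |((q:ℝ) + 1) * ((q:ℝ) * (1 + x ^ 2) ^ (q - 1) * (2 * x) * (2 * x)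
            + (1 + x ^ 2) ^ q * 2)|
        = ((q:ℝ) + 1) * |(q:ℝ) * (1 + x ^ 2) ^ (q - 1) * (2 * x) * (2 * x)
            + (1 + x ^ 2) ^ q * 2| := by
          rw [abs_mul, abs_of_nonneg (by positivity : (0:ℝ) ≤ (q:ℝ) + 1)]
      _ ≤ ((q:ℝ) + 1) * (((q:ℝ) + 2) * (1 + x ^ 2) ^ (q + 1)) := by
          refine mul_le_mul_of_nonneg_left ?_ (by positivity : (0:ℝ) ≤ (q:ℝ) + 1)
          refine (abs_add_le _ _).trans ?_
          linarith [e1, e2]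
      _ = (((q:ℝ) + 1) * ((q:ℝ) + 2)) * (1 + x ^ 2) ^ (q + 1) := by ring
  -- derivatives of F
  set F1 : ℝ → ℝ := iteratedDeriv 1 F with hF1_def
  set F2 : ℝ → ℝ := iteratedDeriv 2 F with hF2_def
  have hF_deriv : ∀ x, HasDerivAt F (F1 x) x := by
    intro x
    have h := hasDerivAt_iteratedDeriv' (f := F) (j := 0) (n := p + 1) hF (by omega) x
    simp only [iteratedDeriv_zero, Nat.zero_add] at h
    exact h
  have hF1_deriv : ∀ x, HasDerivAt F1 (F2 x) x := by
    intro x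
    exact hasDerivAt_iteratedDeriv' (f := F) (j := 1) (n := p + 1) hF (by omega) x
  have hFc : Continuous F := hF.continuous
  have hFjc : ∀ j, j ≤ p + 1 → Continuous (iteratedDeriv j F) := by
    intro j hj
    exact hF.continuous_iteratedDeriv j (by exact_mod_cast hj)
  have hF1c : Continuous F1 := hFjc 1 (by omega)
  have hF2c : Continuous F2 := hFjc 2 (by omega)
  have cont_w : Continuous fun x : ℝ => (1 + x ^ 2) ^ (q + 1) := by fun_prop
  have cont_w1 : Continuous w1 := by rw [hw1_def]; fun_prop
  have cont_w2 : Continuous w2 := by rw [hw2_def]; fun_prop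
  refine ⟨2 * ((p:ℝ) + 1) ^ 2 * cBig, ?_⟩
  intro φ
  set D : ℕ → SchwartzMap ℝ ℝ := SDer φ with hD_def
  have hDcoe : ∀ k, ⇑(D k) = iteratedDeriv k ⇑φ := SDer_coe φ
  have hd : ∀ k, deriv ⇑(D k) = ⇑(D (k + 1)) := by
    intro k
    rw [hDcoe, hDcoe, ← iteratedDeriv_succ]
  set A : ℕ → ℝ := fun k => ∫ x : ℝ, (1 + x ^ 2) ^ (q + 1) * (D k x) ^ 2 with hA_def
  set S : ℝ := ∑ k ∈ Finset.range (p + 1), A k with hS_def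
  have hA0 : ∀ k, 0 ≤ A k := by
    intro k
    rw [hA_def]
    exact integral_nonneg fun x => by positivity
  have hAS : ∀ k, k ≤ p → A k ≤ S := by
    intro k hk
    rw [hS_def]
    exact Finset.single_le_sum (f := A) (fun i _ => hA0 i) (Finset.mem_range.mpr (by omega))
  have hS0 : 0 ≤ S := by
    rw [hS_def]
    exact Finset.sum_nonneg fun i _ => hA0 i
  have hcBigS0 : 0 ≤ cBig * S := mul_nonneg hcBig0 hS0
  have hKS : ∀ (K : ℝ) (k m : ℕ), 0 ≤ K → K ≤ cBig → k ≤ p → m ≤ p →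
      K / 2 * ((∫ x : ℝ, (1 + x ^ 2) ^ (q + 1) * (D k x) ^ 2)
        + ∫ x : ℝ, (1 + x ^ 2) ^ (q + 1) * (D m x) ^ 2) ≤ cBig * S := by
    intro K k m hK0 hKle hk hm
    have h1 : A k ≤ S := hAS k hk
    have h2 : A m ≤ S := hAS m hm
    have e1 : (∫ x : ℝ, (1 + x ^ 2) ^ (q + 1) * (D k x) ^ 2) = A k := by rw [hA_def]
    have e2 : (∫ x : ℝ, (1 + x ^ 2) ^ (q + 1) * (D m x) ^ 2) = A m := by rw [hA_def]
    rw [e1, e2]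
    have h3 : K / 2 * (A k + A m) ≤ K * S := by nlinarith [hA0 k, hA0 m]
    have h4 : K * S ≤ cBig * S := mul_le_mul_of_nonneg_right hKle hS0
    linarith
  have hchoose : ∀ k j : ℕ, k ≤ p → (k.choose j : ℝ) ≤ 2 ^ p := by
    intro k j hk
    have h1 : k.choose j ≤ 2 ^ k := by
      rcases le_or_gt j k with h | h
      · calc k.choose j ≤ ∑ i ∈ Finset.range (k + 1), k.choose i :=
              Finset.single_le_sum (fun _ _ => Nat.zero_le _) (Finset.mem_range.mpr (by omega))
          _ = 2 ^ k := Nat.sum_range_choose k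
      · simp [Nat.choose_eq_zero_of_lt h]
    calc (k.choose j : ℝ) ≤ ((2 ^ k : ℕ) : ℝ) := by exact_mod_cast h1
      _ = (2:ℝ) ^ k := by push_cast; ring
      _ ≤ 2 ^ p := by apply pow_le_pow_right₀ (by norm_num) hk
  have hGb_choose : ∀ k j : ℕ, k ≤ p → j ≤ p + 1 → ∀ x : ℝ,
      |(k.choose j : ℝ) * iteratedDeriv j F x * (1 + x ^ 2) ^ (q + 1)|
        ≤ (2 ^ p * M) * (1 + x ^ 2) ^ (q + 1) := by
    intro k j hk hj x
    have w0 : (0:ℝ) ≤ (1 + x ^ 2) ^ (q + 1) := by positivity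
    rw [abs_mul, abs_mul, abs_of_nonneg (by positivity : (0:ℝ) ≤ ((k.choose j : ℕ) : ℝ)),
      abs_of_nonneg w0]
    exact mul_le_mul_of_nonneg_right
      (mul_le_mul (hchoose k j hk) (hMb j hj x) (abs_nonneg _) (by positivity)) w0
  have hGc_choose : ∀ k j : ℕ, j ≤ p + 1 →
      Continuous fun x : ℝ => (k.choose j : ℝ) * iteratedDeriv j F x * (1 + x ^ 2) ^ (q + 1) := by
    intro k j hj
    exact (continuous_const.mul (hFjc j hj)).mul (by fun_prop)
  have hJint : ∀ k j : ℕ, k ≤ p → j ≤ k →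
      Integrable (fun x : ℝ => (1 + x ^ 2) ^ (q + 1) *
        (D k x * ((k.choose j : ℝ) * iteratedDeriv j F x * D (k - j + 2) x))) := by
    intro k j hk hj
    have h := integrable_G_mul (q + 1) (2 ^ p * M) _ (hGc_choose k j (by omega))
      (hGb_choose k j hk (by omega)) (D k) (D (k - j + 2))
    apply h.congr
    filter_upwards with x
    ring
  have hψF : ∀ k, k ≤ p → iteratedDeriv k (fun x => F x * iteratedDeriv 2 (⇑φ) x)
      = fun x => ∑ j ∈ Finset.range (k + 1),
          (k.choose j : ℝ) * iteratedDeriv j F x * D (k - j + 2) x := by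
    intro k hk
    have hFk : ContDiff ℝ (k : ℕ∞) F := hF.of_le (by exact_mod_cast (by omega : k ≤ p + 1))
    have hgk : ContDiff ℝ (k : ℕ∞) (iteratedDeriv 2 ⇑φ) := by
      rw [← hDcoe 2]
      exact (D 2).smooth _
    rw [leibniz_iteratedDeriv k F _ hFk hgk]
    funext x
    apply Finset.sum_congr rfl
    intro j hj
    rw [iteratedDeriv_comp_iteratedDeriv (k - j) 2 ⇑φ,
      show iteratedDeriv (k - j + 2) ⇑φ = ⇑(D (k - j + 2)) from (hDcoe _).symm]
  have hwInner : wInner p ⇑φ (fun x => F x * iteratedDeriv 2 (⇑φ) x)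
      = ∑ k ∈ Finset.range (p + 1), ∑ j ∈ Finset.range (k + 1),
          ∫ x : ℝ, (1 + x ^ 2) ^ (q + 1) *
            (D k x * ((k.choose j : ℝ) * iteratedDeriv j F x * D (k - j + 2) x)) := by
    rw [wInner]
    apply Finset.sum_congr rfl
    intro k hk
    have hk' : k ≤ p := by
      have := Finset.mem_range.mp hk
      omega
    rw [hψF k hk']
    have e1 : ∀ x : ℝ, (1 + x ^ 2) ^ (2 * p) * (iteratedDeriv k (⇑φ) x *
          (∑ j ∈ Finset.range (k + 1),
            (k.choose j : ℝ) * iteratedDeriv j F x * D (k - j + 2) x))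
        = ∑ j ∈ Finset.range (k + 1), (1 + x ^ 2) ^ (q + 1) *
            (D k x * ((k.choose j : ℝ) * iteratedDeriv j F x * D (k - j + 2) x)) := by
      intro x
      rw [hq, show iteratedDeriv k ⇑φ = ⇑(D k) from (hDcoe _).symm, Finset.mul_sum,
        Finset.mul_sum]
    calc (∫ x : ℝ, (1 + x ^ 2) ^ (2 * p) * (iteratedDeriv k (⇑φ) x *
          (∑ j ∈ Finset.range (k + 1),
            (k.choose j : ℝ) * iteratedDeriv j F x * D (k - j + 2) x)))
        = ∫ x : ℝ, ∑ j ∈ Finset.range (k + 1), (1 + x ^ 2) ^ (q + 1) *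
            (D k x * ((k.choose j : ℝ) * iteratedDeriv j F x * D (k - j + 2) x)) :=
          integral_congr_ae (Filter.Eventually.of_forall e1)
      _ = ∑ j ∈ Finset.range (k + 1), ∫ x : ℝ, (1 + x ^ 2) ^ (q + 1) *
            (D k x * ((k.choose j : ℝ) * iteratedDeriv j F x * D (k - j + 2) x)) :=
          integral_finset_sum _ (fun j hj => hJint k j hk' (by
            have := Finset.mem_range.mp hj
            omega))
  -- pointwise bounds on F and friends
  have hMF : ∀ x : ℝ, |F x| ≤ M := by
    intro x
    have := hMb 0 (by omega) x
    rwa [iteratedDeriv_zero] at this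
  have hMF1 : ∀ x : ℝ, |F1 x| ≤ M := by
    intro x
    have := hMb 1 (by omega) x
    rwa [← hF1_def] at this
  have hMF2 : ∀ x : ℝ, |F2 x| ≤ M := by
    intro x
    have := hMb 2 (by omega) x
    rwa [← hF2_def] at this
  have bcomb : ∀ (a b : ℝ → ℝ) (Ka Kb : ℝ), (∀ x, |a x| ≤ Ka) → (∀ x, |b x| ≤ Kb) →
      0 ≤ Ka → 0 ≤ Kb → ∀ x : ℝ,
      |a x * (1 + x ^ 2) ^ (q + 1) + b x * w1 x|
        ≤ (Ka + Kb * ((q:ℝ) + 1)) * (1 + x ^ 2) ^ (q + 1) := by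
    intro a b Ka Kb ha hb hKa hKb x
    have w0 : (0:ℝ) ≤ (1 + x ^ 2) ^ (q + 1) := by positivity
    refine (abs_add_le _ _).trans ?_
    have h1 : |a x * (1 + x ^ 2) ^ (q + 1)| ≤ Ka * (1 + x ^ 2) ^ (q + 1) := by
      rw [abs_mul, abs_of_nonneg w0]
      exact mul_le_mul_of_nonneg_right (ha x) w0
    have h2 : |b x * w1 x| ≤ Kb * (((q:ℝ) + 1) * (1 + x ^ 2) ^ (q + 1)) := by
      rw [abs_mul]
      exact mul_le_mul (hb x) (hw1b x) (abs_nonneg _) hKb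
    nlinarith
  have bGf : ∀ x : ℝ, |F x * (1 + x ^ 2) ^ (q + 1)| ≤ M * (1 + x ^ 2) ^ (q + 1) := by
    intro x
    have w0 : (0:ℝ) ≤ (1 + x ^ 2) ^ (q + 1) := by positivity
    rw [abs_mul, abs_of_nonneg w0]
    exact mul_le_mul_of_nonneg_right (hMF x) w0
  have bGf' : ∀ x : ℝ, |F1 x * (1 + x ^ 2) ^ (q + 1) + F x * w1 x|
      ≤ (M + M * ((q:ℝ) + 1)) * (1 + x ^ 2) ^ (q + 1) :=
    bcomb F1 F M M hMF1 hMF hM0 hM0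
  have hK3' : (0:ℝ) ≤ M + M * ((q:ℝ) + 1) := by nlinarith
  have hc3' : M + M * ((q:ℝ) + 1) ≤ cBig := by
    have e : M + M * ((q:ℝ) + 1) = M * ((q:ℝ) + 2) := by ring
    rw [e]; exact hc3
  have bH' : ∀ x : ℝ,
      |(F2 x * (1 + x ^ 2) ^ (q + 1) + F1 x * w1 x) + (F1 x * w1 x + F x * w2 x)|
        ≤ (M * (((q:ℝ) + 3) ^ 2)) * (1 + x ^ 2) ^ (q + 1) := by
    intro x
    have w0 : (0:ℝ) ≤ (1 + x ^ 2) ^ (q + 1) := by positivity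
    have h1 := bcomb F2 F1 M M hMF2 hMF1 hM0 hM0 x
    have h2 : |F1 x * w1 x + F x * w2 x|
        ≤ (M * ((q:ℝ) + 1) + M * (((q:ℝ) + 1) * ((q:ℝ) + 2))) * (1 + x ^ 2) ^ (q + 1) := by
      refine (abs_add_le _ _).trans ?_
      have a1 : |F1 x * w1 x| ≤ M * (((q:ℝ) + 1) * (1 + x ^ 2) ^ (q + 1)) := by
        rw [abs_mul]
        exact mul_le_mul (hMF1 x) (hw1b x) (abs_nonneg _) hM0
      have a2 : |F x * w2 x| ≤ M * ((((q:ℝ) + 1) * ((q:ℝ) + 2)) * (1 + x ^ 2) ^ (q + 1)) := by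
        rw [abs_mul]
        exact mul_le_mul (hMF x) (hw2b x) (abs_nonneg _) hM0
      nlinarith
    refine (abs_add_le _ _).trans ?_
    nlinarith [mul_nonneg hM0 w0, mul_nonneg hqc (mul_nonneg hM0 w0)]
  have hGf_cont : Continuous fun y : ℝ => F y * (1 + y ^ 2) ^ (q + 1) := by fun_prop
  have hGf'_cont : Continuous fun x : ℝ => F1 x * (1 + x ^ 2) ^ (q + 1) + F x * w1 x := by
    exact (hF1c.mul cont_w).add (hFc.mul cont_w1)
  have hH'_cont : Continuous fun x : ℝ =>
      (F2 x * (1 + x ^ 2) ^ (q + 1) + F1 x * w1 x) + (F1 x * w1 x + F x * w2 x) := by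
    exact ((hF2c.mul cont_w).add (hF1c.mul cont_w1)).add
      ((hF1c.mul cont_w1).add (hFc.mul cont_w2))
  have hGf_deriv : ∀ x, HasDerivAt (fun y : ℝ => F y * (1 + y ^ 2) ^ (q + 1))
      (F1 x * (1 + x ^ 2) ^ (q + 1) + F x * w1 x) x := fun x =>
    (hF_deriv x).mul (hw_deriv x)
  have hH_deriv : ∀ x, HasDerivAt (fun y : ℝ => F1 y * (1 + y ^ 2) ^ (q + 1) + F y * w1 y)
      ((F2 x * (1 + x ^ 2) ^ (q + 1) + F1 x * w1 x) + (F1 x * w1 x + F x * w2 x)) x := fun x =>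
    ((hF1_deriv x).mul (hw_deriv x)).add ((hF_deriv x).mul (hw1_deriv x))
  -- bound for the good terms
  have hgood : ∀ k j : ℕ, k ≤ p → j ≤ k → k - j + 2 ≤ p →
      (∫ x : ℝ, (1 + x ^ 2) ^ (q + 1) *
        (D k x * ((k.choose j : ℝ) * iteratedDeriv j F x * D (k - j + 2) x)))
        ≤ cBig * S := by
    intro k j hk hj hkj
    have e : (∫ x : ℝ, (1 + x ^ 2) ^ (q + 1) *
          (D k x * ((k.choose j : ℝ) * iteratedDeriv j F x * D (k - j + 2) x)))
        = ∫ x : ℝ, ((k.choose j : ℝ) * iteratedDeriv j F x * (1 + x ^ 2) ^ (q + 1)) *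
            (D k x * D (k - j + 2) x) :=
      integral_congr_ae (Filter.Eventually.of_forall fun x => by ring)
    rw [e]
    refine (key_est (q + 1) (2 ^ p * M) _ (hGc_choose k j (by omega))
      (hGb_choose k j hk (by omega)) (D k) (D (k - j + 2))).trans
      (hKS _ k (k - j + 2) (by positivity) hc1 hk hkj)
  -- the bad term with k + 2 = p + 1, j = 0
  have hbadA : ∀ k : ℕ, k + 2 = p + 1 →
      (∫ x : ℝ, (1 + x ^ 2) ^ (q + 1) * (D k x * (F x * D (k + 2) x)))
        ≤ 2 * (cBig * S) := by
    intro k hk2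
    have hkp : k ≤ p := by omega
    have hd2 : deriv ⇑(D (k + 1)) = ⇑(D (k + 2)) := by
      rw [hd (k + 1)]
    have e0 : (∫ x : ℝ, (1 + x ^ 2) ^ (q + 1) * (D k x * (F x * D (k + 2) x)))
        = ∫ x : ℝ, (fun y : ℝ => F y * (1 + y ^ 2) ^ (q + 1)) x *
            (D k x * deriv ⇑(D (k + 1)) x) := by
      rw [hd2]
      exact integral_congr_ae (Filter.Eventually.of_forall fun x => by ring)
    rw [e0, ibp _ _ hGf_deriv hGf'_cont (q + 1) M (M + M * ((q:ℝ) + 1)) bGf bGf'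
      (D k) (D (k + 1)), hd k]
    have hIa : Integrable (fun x : ℝ =>
        (F1 x * (1 + x ^ 2) ^ (q + 1) + F x * w1 x) * (D k x * D (k + 1) x)) :=
      integrable_G_mul (q + 1) (M + M * ((q:ℝ) + 1)) _ hGf'_cont bGf' (D k) (D (k + 1))
    have hIb : Integrable (fun x : ℝ =>
        (F x * (1 + x ^ 2) ^ (q + 1)) * (D (k + 1) x * D (k + 1) x)) :=
      integrable_G_mul (q + 1) M _ hGf_cont bGf (D (k + 1)) (D (k + 1))
    rw [integral_add hIa hIb]
    have h1 : -(∫ x : ℝ,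
        (F1 x * (1 + x ^ 2) ^ (q + 1) + F x * w1 x) * (D k x * D (k + 1) x)) ≤ cBig * S := by
      rw [← integral_neg]
      have e : (∫ x : ℝ, -((F1 x * (1 + x ^ 2) ^ (q + 1) + F x * w1 x) * (D k x * D (k + 1) x)))
          = ∫ x : ℝ, (-(F1 x * (1 + x ^ 2) ^ (q + 1) + F x * w1 x)) * (D k x * D (k + 1) x) :=
        integral_congr_ae (Filter.Eventually.of_forall fun x => by ring)
      rw [e]
      refine (key_est (q + 1) (M + M * ((q:ℝ) + 1)) _ hGf'_cont.fun_neg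
        (fun x => by rw [abs_neg]; exact bGf' x) (D k) (D (k + 1))).trans
        (hKS _ k (k + 1) hK3' hc3' hkp (by omega))
    have h2 : -(∫ x : ℝ,
        (F x * (1 + x ^ 2) ^ (q + 1)) * (D (k + 1) x * D (k + 1) x)) ≤ cBig * S := by
      rw [← integral_neg]
      have e : (∫ x : ℝ, -((F x * (1 + x ^ 2) ^ (q + 1)) * (D (k + 1) x * D (k + 1) x)))
          = ∫ x : ℝ, (-(F x * (1 + x ^ 2) ^ (q + 1))) * (D (k + 1) x * D (k + 1) x) :=
        integral_congr_ae (Filter.Eventually.of_forall fun x => by ring)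
      rw [e]
      refine (key_est (q + 1) M _ hGf_cont.fun_neg
        (fun x => by rw [abs_neg]; exact bGf x) (D (k + 1)) (D (k + 1))).trans
        (hKS _ (k + 1) (k + 1) hM0 hc2 (by omega) (by omega))
    linarith
  have hG2a_cont : Continuous fun x : ℝ => F2 x * (1 + x ^ 2) ^ (q + 1) + F1 x * w1 x :=
    (hF2c.mul cont_w).add (hF1c.mul cont_w1)
  -- bad term (p, 1)
  have hbad2 : (∫ x : ℝ, (1 + x ^ 2) ^ (q + 1) *
      (D p x * ((p.choose 1 : ℝ) * iteratedDeriv 1 F x * D (p - 1 + 2) x)))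
      ≤ cBig * S := by
    have e0 : (∫ x : ℝ, (1 + x ^ 2) ^ (q + 1) *
          (D p x * ((p.choose 1 : ℝ) * iteratedDeriv 1 F x * D (p - 1 + 2) x)))
        = ∫ x : ℝ, (fun y : ℝ => (p:ℝ) * (F1 y * (1 + y ^ 2) ^ (q + 1))) x *
            (D p x * deriv ⇑(D p) x) := by
      rw [hd p, show p - 1 + 2 = p + 1 by omega]
      refine integral_congr_ae (Filter.Eventually.of_forall fun x => ?_)
      rw [hF1_def, Nat.choose_one_right]
      push_cast
      ring
    have hG2_deriv : ∀ x, HasDerivAt (fun y : ℝ => (p:ℝ) * (F1 y * (1 + y ^ 2) ^ (q + 1)))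
        ((p:ℝ) * (F2 x * (1 + x ^ 2) ^ (q + 1) + F1 x * w1 x)) x := fun x =>
      ((hF1_deriv x).mul (hw_deriv x)).const_mul _
    have bG2 : ∀ x : ℝ, |(p:ℝ) * (F1 x * (1 + x ^ 2) ^ (q + 1))|
        ≤ ((p:ℝ) * M) * (1 + x ^ 2) ^ (q + 1) := by
      intro x
      have w0 : (0:ℝ) ≤ (1 + x ^ 2) ^ (q + 1) := by positivity
      rw [abs_mul, abs_mul, abs_of_nonneg hpc, abs_of_nonneg w0, mul_assoc]
      refine mul_le_mul_of_nonneg_left ?_ hpc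
      exact mul_le_mul_of_nonneg_right (hMF1 x) w0
    have bG2' : ∀ x : ℝ, |(p:ℝ) * (F2 x * (1 + x ^ 2) ^ (q + 1) + F1 x * w1 x)|
        ≤ ((p:ℝ) * (M + M * ((q:ℝ) + 1))) * (1 + x ^ 2) ^ (q + 1) := by
      intro x
      rw [abs_mul, abs_of_nonneg hpc, mul_assoc]
      exact mul_le_mul_of_nonneg_left (bcomb F2 F1 M M hMF2 hMF1 hM0 hM0 x) hpc
    rw [e0, ibp_self _ _ hG2_deriv (continuous_const.mul hG2a_cont) (q + 1)
      ((p:ℝ) * M) ((p:ℝ) * (M + M * ((q:ℝ) + 1))) bG2 bG2' (D p)]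
    rw [← integral_const_mul]
    have e : (∫ x : ℝ, -(1/2:ℝ) * ((p:ℝ) * (F2 x * (1 + x ^ 2) ^ (q + 1) + F1 x * w1 x) *
            (D p x * D p x)))
        = ∫ x : ℝ, (-(1/2:ℝ) * ((p:ℝ) * (F2 x * (1 + x ^ 2) ^ (q + 1) + F1 x * w1 x))) *
            (D p x * D p x) :=
      integral_congr_ae (Filter.Eventually.of_forall fun x => by ring)
    rw [e]
    have hb : ∀ x : ℝ, |(-(1/2:ℝ) * ((p:ℝ) * (F2 x * (1 + x ^ 2) ^ (q + 1) + F1 x * w1 x)))|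
        ≤ ((p:ℝ) * M * ((q:ℝ) + 2) / 2) * (1 + x ^ 2) ^ (q + 1) := by
      intro x
      rw [abs_mul, show |(-(1/2:ℝ))| = 1/2 by norm_num]
      have h1 := bG2' x
      have e2 : ((p:ℝ) * (M + M * ((q:ℝ) + 1))) = (p:ℝ) * M * ((q:ℝ) + 2) := by ring
      rw [e2] at h1
      linarith
    have hK0 : (0:ℝ) ≤ (p:ℝ) * M * ((q:ℝ) + 2) / 2 := by
      have := mul_nonneg (mul_nonneg hpc hM0) (by linarith : (0:ℝ) ≤ (q:ℝ) + 2)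
      linarith
    exact (key_est (q + 1) ((p:ℝ) * M * ((q:ℝ) + 2) / 2) _
      (continuous_const.mul (continuous_const.mul hG2a_cont)) hb (D p) (D p)).trans
      (hKS _ p p hK0 hc5 le_rfl le_rfl)
  -- bad term (p, 0)
  have hbad3 : (∫ x : ℝ, (1 + x ^ 2) ^ (q + 1) *
      (D p x * ((p.choose 0 : ℝ) * iteratedDeriv 0 F x * D (p - 0 + 2) x)))
      ≤ 2 * (cBig * S)
        - ∫ x : ℝ, (1 + x ^ 2) ^ (2 * p) * (iteratedDeriv (p + 1) (⇑φ) x) ^ 2 * F x := by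
    have hd2 : deriv ⇑(D (p + 1)) = ⇑(D (p + 2)) := by rw [hd (p + 1)]
    have e0 : (∫ x : ℝ, (1 + x ^ 2) ^ (q + 1) *
          (D p x * ((p.choose 0 : ℝ) * iteratedDeriv 0 F x * D (p - 0 + 2) x)))
        = ∫ x : ℝ, (fun y : ℝ => F y * (1 + y ^ 2) ^ (q + 1)) x *
            (D p x * deriv ⇑(D (p + 1)) x) := by
      rw [hd2, show p - 0 + 2 = p + 2 by omega]
      refine integral_congr_ae (Filter.Eventually.of_forall fun x => ?_)
      rw [iteratedDeriv_zero, Nat.choose_zero_right]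
      push_cast
      ring
    rw [e0, ibp _ _ hGf_deriv hGf'_cont (q + 1) M (M + M * ((q:ℝ) + 1)) bGf bGf'
      (D p) (D (p + 1)), hd p]
    have hIa : Integrable (fun x : ℝ =>
        (F1 x * (1 + x ^ 2) ^ (q + 1) + F x * w1 x) * (D p x * D (p + 1) x)) :=
      integrable_G_mul (q + 1) (M + M * ((q:ℝ) + 1)) _ hGf'_cont bGf' (D p) (D (p + 1))
    have hIb : Integrable (fun x : ℝ =>
        (F x * (1 + x ^ 2) ^ (q + 1)) * (D (p + 1) x * D (p + 1) x)) :=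
      integrable_G_mul (q + 1) M _ hGf_cont bGf (D (p + 1)) (D (p + 1))
    rw [integral_add hIa hIb]
    have hIb_eq : (∫ x : ℝ, (F x * (1 + x ^ 2) ^ (q + 1)) * (D (p + 1) x * D (p + 1) x))
        = ∫ x : ℝ, (1 + x ^ 2) ^ (2 * p) * (iteratedDeriv (p + 1) (⇑φ) x) ^ 2 * F x := by
      refine integral_congr_ae (Filter.Eventually.of_forall fun x => ?_)
      rw [hq, show iteratedDeriv (p + 1) ⇑φ = ⇑(D (p + 1)) from (hDcoe _).symm]
      ring
    have hIa_eq : (∫ x : ℝ,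
          (F1 x * (1 + x ^ 2) ^ (q + 1) + F x * w1 x) * (D p x * D (p + 1) x))
        = -(1/2) * ∫ x : ℝ, ((F2 x * (1 + x ^ 2) ^ (q + 1) + F1 x * w1 x)
            + (F1 x * w1 x + F x * w2 x)) * (D p x * D p x) := by
      rw [← hd p]
      exact ibp_self _ _ hH_deriv hH'_cont (q + 1) (M + M * ((q:ℝ) + 1))
        (M * (((q:ℝ) + 3) ^ 2)) bGf' bH' (D p)
    rw [hIa_eq, hIb_eq]
    have h5 : (1/2:ℝ) * (∫ x : ℝ, ((F2 x * (1 + x ^ 2) ^ (q + 1) + F1 x * w1 x)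
          + (F1 x * w1 x + F x * w2 x)) * (D p x * D p x)) ≤ cBig * S := by
      rw [← integral_const_mul]
      have e : (∫ x : ℝ, (1/2:ℝ) * (((F2 x * (1 + x ^ 2) ^ (q + 1) + F1 x * w1 x)
            + (F1 x * w1 x + F x * w2 x)) * (D p x * D p x)))
          = ∫ x : ℝ, ((1/2:ℝ) * ((F2 x * (1 + x ^ 2) ^ (q + 1) + F1 x * w1 x)
            + (F1 x * w1 x + F x * w2 x))) * (D p x * D p x) :=
        integral_congr_ae (Filter.Eventually.of_forall fun x => by ring)
      rw [e]
      have hb : ∀ x : ℝ, |(1/2:ℝ) * ((F2 x * (1 + x ^ 2) ^ (q + 1) + F1 x * w1 x)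
            + (F1 x * w1 x + F x * w2 x))|
          ≤ (M * (((q:ℝ) + 3) ^ 2) / 2) * (1 + x ^ 2) ^ (q + 1) := by
        intro x
        rw [abs_mul, show |(1/2:ℝ)| = 1/2 by norm_num]
        linarith [bH' x]
      have hK0 : (0:ℝ) ≤ M * (((q:ℝ) + 3) ^ 2) / 2 := by
        have := mul_nonneg hM0 (sq_nonneg ((q:ℝ) + 3))
        linarith
      exact (key_est (q + 1) (M * (((q:ℝ) + 3) ^ 2) / 2) _
        (continuous_const.mul hH'_cont) hb (D p) (D p)).trans
        (hKS _ p p hK0 hc4 le_rfl le_rfl)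
    linarith
  -- assembling
  have hclaim1 : ∀ k, k < p →
      (∑ j ∈ Finset.range (k + 1), ∫ x : ℝ, (1 + x ^ 2) ^ (q + 1) *
        (D k x * ((k.choose j : ℝ) * iteratedDeriv j F x * D (k - j + 2) x)))
        ≤ ((p:ℝ) + 1) * (2 * (cBig * S)) := by
    intro k hk
    have hterm : ∀ j ∈ Finset.range (k + 1),
        (∫ x : ℝ, (1 + x ^ 2) ^ (q + 1) *
          (D k x * ((k.choose j : ℝ) * iteratedDeriv j F x * D (k - j + 2) x)))
          ≤ 2 * (cBig * S) := by
      intro j hj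
      have hj' : j ≤ k := by
        have := Finset.mem_range.mp hj
        omega
      by_cases hsz : k - j + 2 ≤ p
      · exact (hgood k j (by omega) hj' hsz).trans (by linarith)
      · have hj0 : j = 0 := by omega
        have hk2 : k + 2 = p + 1 := by omega
        subst hj0
        have e : (∫ x : ℝ, (1 + x ^ 2) ^ (q + 1) *
              (D k x * ((k.choose 0 : ℝ) * iteratedDeriv 0 F x * D (k - 0 + 2) x)))
            = ∫ x : ℝ, (1 + x ^ 2) ^ (q + 1) * (D k x * (F x * D (k + 2) x)) := by
          rw [show k - 0 + 2 = k + 2 by omega]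
          refine integral_congr_ae (Filter.Eventually.of_forall fun x => ?_)
          rw [iteratedDeriv_zero, Nat.choose_zero_right]
          push_cast
          ring
        rw [e]
        exact hbadA k hk2
    calc (∑ j ∈ Finset.range (k + 1), ∫ x : ℝ, (1 + x ^ 2) ^ (q + 1) *
          (D k x * ((k.choose j : ℝ) * iteratedDeriv j F x * D (k - j + 2) x)))
        ≤ ∑ _j ∈ Finset.range (k + 1), 2 * (cBig * S) := Finset.sum_le_sum hterm
      _ = ((k:ℝ) + 1) * (2 * (cBig * S)) := by
          rw [Finset.sum_const, Finset.card_range, nsmul_eq_mul]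
          push_cast
          ring
      _ ≤ ((p:ℝ) + 1) * (2 * (cBig * S)) := by
          have h1 : (k:ℝ) + 1 ≤ (p:ℝ) + 1 := by
            have : (k:ℝ) ≤ (p:ℝ) := by exact_mod_cast hk.le
            linarith
          nlinarith [hcBigS0]
  obtain ⟨pm, hpm⟩ : ∃ pm, p = pm + 1 := ⟨p - 1, by omega⟩
  have hclaim2 : (∑ j ∈ Finset.range (p + 1), ∫ x : ℝ, (1 + x ^ 2) ^ (q + 1) *
      (D p x * ((p.choose j : ℝ) * iteratedDeriv j F x * D (p - j + 2) x)))
      ≤ ((p:ℝ) + 1) * (2 * (cBig * S))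
        - ∫ x : ℝ, (1 + x ^ 2) ^ (2 * p) * (iteratedDeriv (p + 1) (⇑φ) x) ^ 2 * F x := by
    set f : ℕ → ℝ := fun j => ∫ x : ℝ, (1 + x ^ 2) ^ (q + 1) *
      (D p x * ((p.choose j : ℝ) * iteratedDeriv j F x * D (p - j + 2) x)) with hf_def
    have e1 : ∑ j ∈ Finset.range (p + 1), f j
        = (∑ j ∈ Finset.range p, f (j + 1)) + f 0 := Finset.sum_range_succ' f p
    have e2 : ∑ j ∈ Finset.range p, f (j + 1)
        = (∑ j ∈ Finset.range pm, f (j + 2)) + f 1 := by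
      rw [hpm]
      exact Finset.sum_range_succ' (fun j => f (j + 1)) pm
    have h3 : ∀ j ∈ Finset.range pm, f (j + 2) ≤ 2 * (cBig * S) := by
      intro j hj
      have hj' : j < pm := Finset.mem_range.mp hj
      refine (hgood p (j + 2) le_rfl (by omega) (by omega)).trans (by linarith)
    have h4 : ∑ j ∈ Finset.range pm, f (j + 2) ≤ (pm:ℝ) * (2 * (cBig * S)) := by
      calc ∑ j ∈ Finset.range pm, f (j + 2) ≤ ∑ _j ∈ Finset.range pm, 2 * (cBig * S) :=
            Finset.sum_le_sum h3
        _ = (pm:ℝ) * (2 * (cBig * S)) := by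
            rw [Finset.sum_const, Finset.card_range, nsmul_eq_mul]
    have h5 : f 1 ≤ cBig * S := hbad2
    have h6 : f 0 ≤ 2 * (cBig * S)
        - ∫ x : ℝ, (1 + x ^ 2) ^ (2 * p) * (iteratedDeriv (p + 1) (⇑φ) x) ^ 2 * F x := hbad3
    have hpm' : ((pm:ℝ) + 2) = (p:ℝ) + 1 := by
      rw [hpm]
      push_cast
      ring
    have : ∑ j ∈ Finset.range (p + 1), f j ≤ ((pm:ℝ) + 2) * (2 * (cBig * S))
        - ∫ x : ℝ, (1 + x ^ 2) ^ (2 * p) * (iteratedDeriv (p + 1) (⇑φ) x) ^ 2 * F x := by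
      rw [e1, e2]
      nlinarith [hcBigS0]
    rw [hpm'] at this
    exact this
  have hwN : (wNorm p ⇑φ) ^ 2 = S := by
    rw [wNorm, Real.sq_sqrt]
    · rw [hS_def]
      apply Finset.sum_congr rfl
      intro k hk
      rw [hA_def]
      refine integral_congr_ae (Filter.Eventually.of_forall fun x => ?_)
      rw [hq, show iteratedDeriv k ⇑φ = ⇑(D k) from (hDcoe _).symm]
    · exact Finset.sum_nonneg fun k _ => integral_nonneg fun x => by positivity
  rw [hwInner, hwN]
  rw [Finset.sum_range_succ]
  have h7 : (∑ k ∈ Finset.range p, ∑ j ∈ Finset.range (k + 1),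
      ∫ x : ℝ, (1 + x ^ 2) ^ (q + 1) *
        (D k x * ((k.choose j : ℝ) * iteratedDeriv j F x * D (k - j + 2) x)))
      ≤ (p:ℝ) * (((p:ℝ) + 1) * (2 * (cBig * S))) := by
    calc (∑ k ∈ Finset.range p, ∑ j ∈ Finset.range (k + 1),
        ∫ x : ℝ, (1 + x ^ 2) ^ (q + 1) *
          (D k x * ((k.choose j : ℝ) * iteratedDeriv j F x * D (k - j + 2) x)))
        ≤ ∑ _k ∈ Finset.range p, ((p:ℝ) + 1) * (2 * (cBig * S)) :=
          Finset.sum_le_sum fun k hk => hclaim1 k (Finset.mem_range.mp hk)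
      _ = (p:ℝ) * (((p:ℝ) + 1) * (2 * (cBig * S))) := by
          rw [Finset.sum_const, Finset.card_range, nsmul_eq_mul]
  have hfinal : (p:ℝ) * (((p:ℝ) + 1) * (2 * (cBig * S)))
      + (((p:ℝ) + 1) * (2 * (cBig * S))) = 2 * ((p:ℝ) + 1) ^ 2 * cBig * S := by
    ring
  linarith [hclaim2, h7]
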